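/- arXiv:0903.5452 — 3 statements merged into one kernel-verified Lean document; each statement's English description precedes it below -/
import Mathlib

section
/- For ν ∈ [0, 1/2) there is a constant C_ν such that for all t₁, t₂ ∈ ℝ with |t₁ - t₂| ≤ 1, the H^ν(ℝ) Sobolev norm of the difference of indicator functions 1_{[0,t₁]} - 1_{[0,t₂]} is at most C_ν |t₂ - t₁|^{1/2 - ν}. -/
open MeasureTheory Real Set
noncomputable section

/-- Fourier transform with the paper's normalization `𝓕f(ξ) = ∫ e^{-iξx} f(x) dx`. -/
def FT (f : ℝ → ℂ) (ξ : ℝ) : ℂ := ∫ x : ℝ, Complex.exp (-(Complex.I * ξ * x)) * f x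

/-- Square of the `H^s(ℝ)` Sobolev norm. -/
def sobNormSq (s : ℝ) (f : ℝ → ℂ) : ℝ := ∫ τ : ℝ, (1 + τ^2) ^ s * ‖FT f τ‖^2

/-- The `H^s(ℝ)` Sobolev norm. -/
def sobNorm (s : ℝ) (f : ℝ → ℂ) : ℝ := Real.sqrt (sobNormSq s f)

/-- Membership in `H^s(ℝ)`. -/
def MemSob (s : ℝ) (f : ℝ → ℂ) : Prop :=
  MeasureTheory.Integrable (fun τ : ℝ => (1 + τ^2) ^ s * ‖FT f τ‖^2)

/-- Signed indicator `1_{[0,t]}` (for `t < 0`, `-1_{[t,0]}`), so that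
`𝓕(ind t)(τ) = (e^{-iτt} - 1)/(-iτ)`. -/
def ind (t : ℝ) : ℝ → ℂ :=
  fun s => if 0 ≤ t then Set.indicator (Set.Ioc 0 t) (fun _ => (1:ℂ)) s
           else - Set.indicator (Set.Ioc t 0) (fun _ => (1:ℂ)) s

/-! The difference of the two indicators is, up to sign, the indicator of an interval of length
`δ = |t₁ - t₂| ≤ 1`. Its Fourier transform is bounded both by `δ` and by `2 / |τ|`, so
`|𝓕|² (1 + δ²τ²) ≤ 5δ²`; since `δ ≤ 1`, also `(1 + τ²)^ν ≤ δ^{-2ν} (1 + δ²τ²)^ν`. Hence the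
integrand of the squared norm is at most `5 δ^{2-2ν} (1 + (δτ)²)^{ν-1}`, which is integrable because
`2(1 - ν) > 1`, and the substitution `u = δτ` turns its integral into `δ^{1-2ν}` times a constant
depending only on `ν`. -/

lemma ind_sub_ind_of_le {t₁ t₂ : ℝ} (h : t₂ ≤ t₁) :
    (fun s => ind t₁ s - ind t₂ s) = (Ioc t₂ t₁).indicator 1 := by
  funext s
  simp only [ind, indicator, mem_Ioc, Pi.one_apply]
  split_ifs <;> grind

lemma FT_neg (f : ℝ → ℂ) (τ : ℝ) : FT (-f) τ = -FT f τ := by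
  simp only [FT, Pi.neg_apply, mul_neg, integral_neg]

lemma sobNorm_sub_comm (s : ℝ) (f g : ℝ → ℂ) :
    sobNorm s (fun x => f x - g x) = sobNorm s (fun x => g x - f x) := by
  have h : (fun x => f x - g x) = -(fun x => g x - f x) := by funext x; simp
  simp only [sobNorm, sobNormSq, h, FT_neg, norm_neg]

lemma FT_indicator_Ioc_eq_setIntegral (a b τ : ℝ) :
    FT ((Ioc a b).indicator 1) τ = ∫ x in Ioc a b, Complex.exp (-(Complex.I * τ * x)) := by
  rw [FT, ← integral_indicator measurableSet_Ioc]
  congr 1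
  funext x
  by_cases hx : x ∈ Ioc a b <;> simp [hx]

lemma FT_indicator_Ioc {a b τ : ℝ} (hab : a ≤ b) (hτ : τ ≠ 0) :
    FT ((Ioc a b).indicator 1) τ
      = (Complex.exp (-(Complex.I * τ * b)) - Complex.exp (-(Complex.I * τ * a)))
          / (-(Complex.I * τ)) := by
  have hc : -(Complex.I * τ) ≠ 0 := by simp [hτ]
  have h := integral_exp_mul_complex (a := a) (b := b) hc
  simp only [neg_mul] at h
  rw [FT_indicator_Ioc_eq_setIntegral, ← intervalIntegral.integral_of_le hab, h]

lemma norm_exp_neg_I_mul (τ x : ℝ) : ‖Complex.exp (-(Complex.I * τ * x))‖ = 1 := by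
  rw [show -(Complex.I * τ * x) = ((-(τ * x) : ℝ) : ℂ) * Complex.I by push_cast; ring]
  exact Complex.norm_exp_ofReal_mul_I _

lemma norm_FT_indicator_Ioc_le {a b : ℝ} (hab : a ≤ b) (τ : ℝ) :
    ‖FT ((Ioc a b).indicator 1) τ‖ ≤ b - a := by
  rw [FT_indicator_Ioc_eq_setIntegral]
  refine (norm_setIntegral_le_of_norm_le_const (C := 1) measure_Ioc_lt_top
    fun x _ => (norm_exp_neg_I_mul τ x).le).trans_eq ?_
  simp [hab]

lemma norm_FT_indicator_Ioc_mul_abs_le {a b : ℝ} (hab : a ≤ b) (τ : ℝ) :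
    ‖FT ((Ioc a b).indicator 1) τ‖ * |τ| ≤ 2 := by
  rcases eq_or_ne τ 0 with rfl | hτ
  · simp
  have hτ' : 0 < |τ| := abs_pos.2 hτ
  rw [FT_indicator_Ioc hab hτ, norm_div, div_mul_eq_mul_div, div_le_iff₀ (by simpa using hτ')]
  calc _ ≤ (‖Complex.exp (-(Complex.I * τ * b))‖ + ‖Complex.exp (-(Complex.I * τ * a))‖)
        * |τ| := by gcongr; exact norm_sub_le _ _
    _ = 2 * ‖-(Complex.I * τ)‖ := by
        rw [norm_exp_neg_I_mul, norm_exp_neg_I_mul, norm_neg, norm_mul, Complex.norm_I,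
          Complex.norm_real, Real.norm_eq_abs]
        ring

lemma integrable_one_add_sq_rpow {p : ℝ} (hp : p < -1 / 2) :
    Integrable fun u : ℝ => (1 + u ^ 2) ^ p := by
  convert integrable_rpow_neg_one_add_norm_sq (E := ℝ) (μ := volume) (r := -2 * p)
    (by simp; linarith) using 3 with u
  · simp
  · ring

lemma integral_one_add_mul_sq_rpow {δ : ℝ} (hδ : 0 < δ) (p : ℝ) :
    ∫ τ : ℝ, (1 + (δ * τ) ^ 2) ^ p = δ⁻¹ * ∫ u : ℝ, (1 + u ^ 2) ^ p := by
  rw [Measure.integral_comp_mul_left (fun u => (1 + u ^ 2) ^ p), abs_inv, abs_of_pos hδ,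
    smul_eq_mul]

lemma one_add_sq_rpow_mul_sq_le {ν δ τ n : ℝ} (hν : 0 ≤ ν) (hδ : 0 < δ) (hδ1 : δ ≤ 1)
    (hn0 : 0 ≤ n) (hn : n ≤ δ) (hnτ : n * |τ| ≤ 2) :
    (1 + τ ^ 2) ^ ν * n ^ 2 ≤ 5 * δ ^ (2 - 2 * ν) * (1 + (δ * τ) ^ 2) ^ (ν - 1) := by
  set P := 1 + (δ * τ) ^ 2
  have hP : 0 < P := by positivity
  have hdecay : n ^ 2 * P ≤ 5 * δ ^ 2 := by
    have : n ^ 2 * τ ^ 2 ≤ 4 := by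
      rw [← sq_abs τ, ← mul_pow]
      nlinarith [mul_nonneg hn0 (abs_nonneg τ)]
    nlinarith
  have hweight : (1 + τ ^ 2) ^ ν ≤ (δ ^ 2)⁻¹ ^ ν * P ^ ν := by
    rw [← mul_rpow (by positivity) hP.le]
    gcongr
    rw [le_inv_mul_iff₀ (by positivity)]
    nlinarith
  calc (1 + τ ^ 2) ^ ν * n ^ 2 ≤ ((δ ^ 2)⁻¹ ^ ν * P ^ ν) * (5 * δ ^ 2 / P) := by
        gcongr
        rwa [le_div_iff₀ hP]
    _ = 5 * δ ^ (2 - 2 * ν) * P ^ (ν - 1) := by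
        rw [rpow_sub_one hP.ne', rpow_sub hδ, rpow_two, rpow_mul hδ.le, rpow_two,
          inv_rpow (by positivity)]
        field_simp

lemma sobNormSq_indicator_Ioc_le {ν a b : ℝ} (hν0 : 0 ≤ ν) (hν1 : ν < 1 / 2) (hab : a < b)
    (hba : b - a ≤ 1) :
    sobNormSq ν ((Ioc a b).indicator 1)
      ≤ 5 * (∫ u : ℝ, (1 + u ^ 2) ^ (ν - 1)) * (b - a) ^ (1 - 2 * ν) := by
  set δ := b - a
  have hδ : 0 < δ := sub_pos.2 hab
  have hbound : ∀ τ : ℝ, (1 + τ ^ 2) ^ ν * ‖FT ((Ioc a b).indicator 1) τ‖ ^ 2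
      ≤ 5 * δ ^ (2 - 2 * ν) * (1 + (δ * τ) ^ 2) ^ (ν - 1) := fun τ =>
    one_add_sq_rpow_mul_sq_le hν0 hδ hba (norm_nonneg _) (norm_FT_indicator_Ioc_le hab.le τ)
      (norm_FT_indicator_Ioc_mul_abs_le hab.le τ)
  have hint : Integrable fun τ : ℝ => 5 * δ ^ (2 - 2 * ν) * (1 + (δ * τ) ^ 2) ^ (ν - 1) :=
    ((integrable_one_add_sq_rpow (by linarith)).comp_mul_left' hδ.ne').const_mul _
  calc sobNormSq ν ((Ioc a b).indicator 1)
      ≤ ∫ τ : ℝ, 5 * δ ^ (2 - 2 * ν) * (1 + (δ * τ) ^ 2) ^ (ν - 1) :=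
        integral_mono_of_nonneg (.of_forall fun τ => by positivity) hint (.of_forall hbound)
    _ = 5 * δ ^ (2 - 2 * ν) * (δ⁻¹ * ∫ u : ℝ, (1 + u ^ 2) ^ (ν - 1)) := by
        rw [integral_const_mul, integral_one_add_mul_sq_rpow hδ]
    _ = 5 * (∫ u : ℝ, (1 + u ^ 2) ^ (ν - 1)) * δ ^ (1 - 2 * ν) := by
        rw [show 1 - 2 * ν = 2 - 2 * ν - 1 by ring, rpow_sub_one hδ.ne']
        field_simp

lemma sobNorm_indicator_Ioc_le {ν a b : ℝ} (hν0 : 0 ≤ ν) (hν1 : ν < 1 / 2) (hab : a ≤ b)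
    (hba : b - a ≤ 1) :
    sobNorm ν ((Ioc a b).indicator 1)
      ≤ √(5 * ∫ u : ℝ, (1 + u ^ 2) ^ (ν - 1)) * (b - a) ^ ((1 : ℝ) / 2 - ν) := by
  rcases hab.eq_or_lt with rfl | hlt
  · have hzero : sobNorm ν ((Ioc a a).indicator 1) = 0 := by simp [sobNorm, sobNormSq, FT]
    exact hzero.trans_le (mul_nonneg (sqrt_nonneg _) (rpow_nonneg (by simp) _))
  calc sobNorm ν ((Ioc a b).indicator 1)
      ≤ √(5 * (∫ u : ℝ, (1 + u ^ 2) ^ (ν - 1)) * (b - a) ^ (1 - 2 * ν)) :=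
        sqrt_le_sqrt (sobNormSq_indicator_Ioc_le hν0 hν1 hlt hba)
    _ = √(5 * ∫ u : ℝ, (1 + u ^ 2) ^ (ν - 1)) * (b - a) ^ ((1 : ℝ) / 2 - ν) := by
        rw [sqrt_mul' _ (by positivity), sqrt_eq_rpow ((b - a) ^ _), ← rpow_mul (by linarith)]
        ring_nf

theorem indicator_difference_sobolev_bound (ν : ℝ) (hν : ν ∈ Set.Ico (0:ℝ) (1/2)) :
    ∃ C : ℝ, 0 < C ∧ ∀ t₁ t₂ : ℝ, |t₁ - t₂| ≤ 1 →
      sobNorm ν (fun s => ind t₁ s - ind t₂ s) ≤ C * |t₂ - t₁| ^ ((1:ℝ)/2 - ν) := by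
  obtain ⟨hν0, hν1⟩ := hν
  -- the `+ 1` gives `0 < C` without having to show that the integral is positive
  refine ⟨√(5 * ∫ u : ℝ, (1 + u ^ 2) ^ (ν - 1)) + 1, by positivity, fun t₁ t₂ hdist => ?_⟩
  wlog h : t₂ ≤ t₁ generalizing t₁ t₂
  · rw [sobNorm_sub_comm, abs_sub_comm]
    exact this t₂ t₁ (by rwa [abs_sub_comm]) (by linarith)
  have hδ : |t₂ - t₁| = t₁ - t₂ := by rw [abs_sub_comm, abs_of_nonneg (sub_nonneg.2 h)]
  rw [ind_sub_ind_of_le h, hδ]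
  calc sobNorm ν ((Ioc t₂ t₁).indicator 1)
      ≤ √(5 * ∫ u : ℝ, (1 + u ^ 2) ^ (ν - 1)) * (t₁ - t₂) ^ ((1 : ℝ) / 2 - ν) :=
        sobNorm_indicator_Ioc_le hν0 hν1 h (by rwa [← hδ, abs_sub_comm])
    _ ≤ _ := by
        have : 0 ≤ (t₁ - t₂) ^ ((1 : ℝ) / 2 - ν) := rpow_nonneg (sub_nonneg.2 h) _
        gcongr
        linarith
end
end

section
/- The map t ↦ 1_{[0,t]} from [0,∞) to H^ν(ℝ) is continuous for every ν < 1/2. -/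
open MeasureTheory Real Set
noncomputable section

/-! The Fourier transform of `1_{[0,t]} - 1_{[0,t₀]}` is `∫_{t₀}^{t} e^{-iτx} dx`, bounded both by
`|t - t₀|` and by `2 / |τ|`. For `|t - t₀| ≤ 1` these give the majorant `8 (1 + τ²)^(ν - 1)`, which
is integrable exactly because `ν < 1/2`, while the first bound kills the integrand pointwise as
`t → t₀`; dominated convergence concludes. -/

open Filter Topology

lemma cexp_mul_ind_eq_indicator_sub (τ t : ℝ) :
    (fun x : ℝ => Complex.exp (-(Complex.I * τ * x)) * ind t x)
      = (Ioc 0 t).indicator (fun x : ℝ => Complex.exp (-(Complex.I * τ * x)))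
        - (Ioc t 0).indicator (fun x : ℝ => Complex.exp (-(Complex.I * τ * x))) := by
  funext x
  by_cases ht : 0 ≤ t
  · simp [ind, ht, indicator_apply]
  · have : ¬(0 < x ∧ x ≤ t) := fun h => ht (h.1.le.trans h.2)
    simp [ind, ht, indicator_apply, this]

lemma integrable_indicator_Ioc_cexp (τ a b : ℝ) :
    Integrable ((Ioc a b).indicator fun x : ℝ => Complex.exp (-(Complex.I * τ * x))) :=
  (Continuous.integrableOn_Ioc (by fun_prop)).integrable_indicator measurableSet_Ioc

lemma integrable_cexp_mul_ind (τ t : ℝ) :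
    Integrable (fun x : ℝ => Complex.exp (-(Complex.I * τ * x)) * ind t x) := by
  rw [cexp_mul_ind_eq_indicator_sub]
  exact (integrable_indicator_Ioc_cexp τ 0 t).sub (integrable_indicator_Ioc_cexp τ t 0)

lemma FT_ind (τ t : ℝ) : FT (ind t) τ = ∫ x in (0:ℝ)..t, Complex.exp (-(Complex.I * τ * x)) := by
  rw [FT, cexp_mul_ind_eq_indicator_sub,
    integral_sub' (integrable_indicator_Ioc_cexp τ 0 t) (integrable_indicator_Ioc_cexp τ t 0),
    integral_indicator measurableSet_Ioc, integral_indicator measurableSet_Ioc]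
  rfl

lemma FT_ind_sub (τ t t₀ : ℝ) :
    FT (fun s => ind t s - ind t₀ s) τ = ∫ x in t₀..t, Complex.exp (-(Complex.I * τ * x)) := by
  have hc : Continuous fun x : ℝ => Complex.exp (-(Complex.I * τ * x)) := by fun_prop
  simp_rw [FT, mul_sub]
  rw [integral_sub (integrable_cexp_mul_ind τ t) (integrable_cexp_mul_ind τ t₀), ← FT, ← FT,
    FT_ind, FT_ind, intervalIntegral.integral_interval_sub_left (hc.intervalIntegrable _ _)
      (hc.intervalIntegrable _ _)]

lemma norm_integral_cexp_le_abs_sub (τ a b : ℝ) :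
    ‖∫ x in a..b, Complex.exp (-(Complex.I * τ * x))‖ ≤ |b - a| := by
  simpa using intervalIntegral.norm_integral_le_of_norm_le_const (C := 1)
    (f := fun x : ℝ => Complex.exp (-(Complex.I * τ * x))) (a := a) (b := b)
    (fun x _ => by simp [Complex.norm_exp])

lemma norm_integral_cexp_le_two_div {τ : ℝ} (hτ : τ ≠ 0) (a b : ℝ) :
    ‖∫ x in a..b, Complex.exp (-(Complex.I * τ * x))‖ ≤ 2 / |τ| := by
  have hc : -(Complex.I * τ) ≠ 0 := by simp [hτ]
  simp only [neg_mul_eq_neg_mul (Complex.I * τ)]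
  rw [integral_exp_mul_complex hc, norm_div]
  have hnum : ‖Complex.exp (-(Complex.I * τ) * b) - Complex.exp (-(Complex.I * τ) * a)‖ ≤ 2 :=
    calc _ ≤ ‖Complex.exp (-(Complex.I * τ) * b)‖ + ‖Complex.exp (-(Complex.I * τ) * a)‖ :=
          norm_sub_le _ _
      _ = 2 := by simp [Complex.norm_exp]; norm_num
  simpa using div_le_div_of_nonneg_right hnum (abs_nonneg τ)

lemma sq_norm_integral_cexp_le {a b : ℝ} (hab : |b - a| ≤ 1) (τ : ℝ) :
    ‖∫ x in a..b, Complex.exp (-(Complex.I * τ * x))‖ ^ 2 ≤ 8 / (1 + τ ^ 2) := by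
  have hpos : (0:ℝ) < 1 + τ ^ 2 := by positivity
  rcases le_or_gt (τ ^ 2) 1 with hτ | hτ
  · calc _ ≤ |b - a| ^ 2 := by gcongr; exact norm_integral_cexp_le_abs_sub τ a b
      _ ≤ 1 := pow_le_one₀ (abs_nonneg _) hab
      _ ≤ 8 / (1 + τ ^ 2) := by rw [le_div_iff₀ hpos]; linarith
  · have hτ0 : τ ≠ 0 := by rintro rfl; norm_num at hτ
    calc _ ≤ (2 / |τ|) ^ 2 := by gcongr; exact norm_integral_cexp_le_two_div hτ0 a b
      _ = 4 / τ ^ 2 := by rw [div_pow, sq_abs]; norm_num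
      _ ≤ 8 / (1 + τ ^ 2) := by rw [div_le_div_iff₀ (by positivity) hpos]; linarith

lemma integrable_one_add_sq_rpow_s5 {s : ℝ} (hs : s < -1 / 2) :
    Integrable (fun τ : ℝ => (1 + τ ^ 2) ^ s) := by
  have hr : (Module.finrank ℝ ℝ : ℝ) < -2 * s := by rw [Module.finrank_self]; push_cast; linarith
  simpa [Real.norm_eq_abs, sq_abs, show -(-2 * s) / 2 = s by ring]
    using integrable_rpow_neg_one_add_norm_sq (E := ℝ) (μ := volume) hr

lemma continuous_integral_cexp (a b : ℝ) :
    Continuous fun τ : ℝ => ∫ x in a..b, Complex.exp (-(Complex.I * τ * x)) :=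
  intervalIntegral.continuous_parametric_intervalIntegral_of_continuous' (by fun_prop) a b

lemma tendsto_sobNormSq_ind_sub {ν : ℝ} (hν : ν < 1/2) (t₀ : ℝ) :
    Tendsto (fun t : ℝ => sobNormSq ν (fun s => ind t s - ind t₀ s)) (𝓝 t₀) (𝓝 0) := by
  simp_rw [sobNormSq, FT_ind_sub]
  have hweight : Continuous fun τ : ℝ => (1 + τ ^ 2) ^ ν :=
    (by fun_prop : Continuous fun τ : ℝ => 1 + τ ^ 2).rpow_const fun τ => Or.inl (by positivity)
  have hmeas : ∀ t : ℝ, AEStronglyMeasurable fun τ : ℝ =>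
      (1 + τ ^ 2) ^ ν * ‖∫ x in t₀..t, Complex.exp (-(Complex.I * τ * x))‖ ^ 2 := fun t =>
    (hweight.mul ((continuous_integral_cexp t₀ t).norm.pow 2)).aestronglyMeasurable
  have hclose : ∀ᶠ t in 𝓝 t₀, |t - t₀| ≤ 1 := by
    filter_upwards [Metric.closedBall_mem_nhds t₀ one_pos] with t ht
    simpa [Metric.mem_closedBall, Real.dist_eq] using ht
  have hbound : ∀ᶠ t in 𝓝 t₀, ∀ τ : ℝ,
      ‖(1 + τ ^ 2) ^ ν * ‖∫ x in t₀..t, Complex.exp (-(Complex.I * τ * x))‖ ^ 2‖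
        ≤ 8 * (1 + τ ^ 2) ^ (ν - 1) := by
    filter_upwards [hclose] with t ht τ
    have hpos : (0:ℝ) < 1 + τ ^ 2 := by positivity
    rw [Real.norm_of_nonneg (by positivity), Real.rpow_sub hpos, Real.rpow_one]
    calc _ ≤ (1 + τ ^ 2) ^ ν * (8 / (1 + τ ^ 2)) := by
          gcongr; exact sq_norm_integral_cexp_le ht τ
      _ = _ := by ring
  have hlim : ∀ τ : ℝ, Tendsto (fun t : ℝ =>
      (1 + τ ^ 2) ^ ν * ‖∫ x in t₀..t, Complex.exp (-(Complex.I * τ * x))‖ ^ 2) (𝓝 t₀) (𝓝 0) := by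
    intro τ
    have hquad : Tendsto (fun t : ℝ => (1 + τ ^ 2) ^ ν * |t - t₀| ^ 2) (𝓝 t₀) (𝓝 0) := by
      simpa using (by fun_prop : Continuous fun t : ℝ => (1 + τ ^ 2) ^ ν * |t - t₀| ^ 2).tendsto t₀
    refine squeeze_zero (fun t => by positivity) (fun t => ?_) hquad
    gcongr
    exact norm_integral_cexp_le_abs_sub τ t₀ t
  simpa using tendsto_integral_filter_of_dominated_convergence
    (fun τ : ℝ => 8 * (1 + τ ^ 2) ^ (ν - 1)) (.of_forall hmeas)
    (hbound.mono fun _ h => .of_forall h)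
    ((integrable_one_add_sq_rpow_s5 (by linarith)).const_mul 8) (.of_forall hlim)

theorem indicator_map_continuous_into_Hnu_general (ν : ℝ) (hν : ν < 1/2) (t₀ : ℝ) :
    Filter.Tendsto (fun t : ℝ => sobNorm ν (fun s => ind t s - ind t₀ s))
      (nhdsWithin t₀ (Set.Ici 0)) (nhds 0) := by
  simpa [sobNorm, Function.comp_def] using
    ((continuous_sqrt.tendsto 0).comp (tendsto_sobNormSq_ind_sub hν t₀)).mono_left
      nhdsWithin_le_nhds

theorem indicator_map_continuous_into_Hnu (ν : ℝ) (hν : ν < 1/2) (t₀ : ℝ) (ht₀ : 0 ≤ t₀) :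
    Filter.Tendsto (fun t : ℝ => sobNorm ν (fun s => ind t s - ind t₀ s))
      (nhdsWithin t₀ (Set.Ici 0)) (nhds 0) :=
  indicator_map_continuous_into_Hnu_general ν hν t₀
end
end

section
/- Let u₀ ∈ H^{2ν - 1/2}(ℝ) for ν ∈ ℝ with 2ν - 1/2 ≥ 0, and define II(t) = ∫₁^∞ e^{-itτ} [𝓕u₀(√τ) + 𝓕u₀(-√τ)] dτ/(2π√τ). Then ‖II‖_{H^ν(ℝ_t)} ≤ C ‖u₀‖_{H^{2ν - 1/2}(ℝ_x)}. -/
open MeasureTheory Real Set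
noncomputable section

/-- The high-frequency part of the free Schrödinger evolution at x = 0. -/
def IIpart (u₀ : ℝ → ℂ) (t : ℝ) : ℂ :=
  ∫ τ in Set.Ioi (1:ℝ),
    Complex.exp (-(Complex.I * t * τ)) * (FT u₀ (Real.sqrt τ) + FT u₀ (-Real.sqrt τ))
      / (2 * Real.pi * (Real.sqrt τ : ℂ))

/-! `IIpart u₀` is the Fourier transform of the density
`g(τ) = 1_{τ > 1} (𝓕u₀(√τ) + 𝓕u₀(-√τ)) / (2π√τ)`, which is continuous away from `τ = 1`.
Fourier inversion therefore gives `‖II‖²_{H^ν} ≤ (2π)² ∫ (1 + τ²)^ν |g(τ)|² dτ` (when the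
inversion theorem does not apply, the transform of `II` is the junk value `0`). Substituting
`τ = ξ²` turns the right side into `∫_{ξ > 1} (2/ξ) (1 + ξ⁴)^ν |𝓕u₀(ξ) + 𝓕u₀(-ξ)|² dξ`, and for
`ξ > 1` and `ν ≥ 0` the weight `(2/ξ) (1 + ξ⁴)^ν` is at most `3 (1 + ξ²)^(2ν - 1/2)`. -/

open FourierTransform

lemma FT_eq_fourier (f : ℝ → ℂ) (ξ : ℝ) : FT f ξ = 𝓕 f (ξ / (2 * π)) := by
  rw [Real.fourier_real_eq_integral_exp_smul, FT]
  congr 1 with x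
  rw [smul_eq_mul]
  congr 2
  push_cast
  field_simp

lemma FT_eq_two_pi_mul_fourier (g : ℝ → ℂ) (τ : ℝ) :
    FT g τ = 2 * π * 𝓕 (fun x => g (2 * π * x)) τ := by
  have hsub := Measure.integral_comp_mul_left
    (fun t : ℝ => Complex.exp (-(Complex.I * τ * t)) * g t) (2 * π)
  rw [abs_of_pos (by positivity), Complex.real_smul] at hsub
  rw [Real.fourier_real_eq_integral_exp_smul, FT]
  have hexp : ∀ x : ℝ, Complex.exp (↑(-2 * π * x * τ) * Complex.I) • g (2 * π * x) =
      Complex.exp (-(Complex.I * τ * ↑(2 * π * x))) * g (2 * π * x) := fun x => by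
    rw [smul_eq_mul]
    congr 2
    push_cast
    ring
  simp_rw [hexp, hsub, ← mul_assoc]
  push_cast
  rw [mul_inv_cancel₀ (by exact_mod_cast Real.two_pi_pos.ne'), one_mul]

lemma FT_eq_zero_of_not_integrable {f : ℝ → ℂ} (hf : ¬ Integrable f) : FT f = 0 := by
  ext ξ
  rw [FT_eq_fourier, Real.fourier_eq]
  exact integral_undef (mt (Real.fourierIntegral_convergent_iff _).1 hf)

lemma continuous_FT (f : ℝ → ℂ) : Continuous (FT f) := by
  by_cases hf : Integrable f
  · rw [show FT f = fun ξ => 𝓕 f (ξ / (2 * π)) from funext (FT_eq_fourier f)]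
    exact (VectorFourier.fourierIntegral_continuous Real.continuous_fourierChar
      continuous_inner hf).comp (by fun_prop)
  · rw [FT_eq_zero_of_not_integrable hf]
    exact continuous_const

lemma integrable_FT_iff (f : ℝ → ℂ) : Integrable (FT f) ↔ Integrable (𝓕 f) := by
  simp_rw [show FT f = fun ξ => 𝓕 f (ξ / (2 * π)) from funext (FT_eq_fourier f), div_eq_mul_inv]
  exact integrable_comp_mul_right_iff _ (by positivity)

lemma FT_FT_apply {f : ℝ → ℂ} (hf : Integrable f) (hFf : Integrable (FT f)) {τ : ℝ}
    (hτ : ContinuousAt f (-τ)) : FT (FT f) τ = 2 * π * f (-τ) := by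
  have hscale : (fun x => FT f (2 * π * x)) = 𝓕 f := by
    ext x
    rw [FT_eq_fourier, mul_div_cancel_left₀ _ (by positivity)]
  rw [FT_eq_two_pi_mul_fourier, hscale, ← neg_neg τ, ← Real.fourierInv_eq_fourier_neg, neg_neg,
    hf.fourierInv_fourier_eq ((integrable_FT_iff f).1 hFf) hτ]

lemma FT_FT_eq_zero_of_not_integrable {f : ℝ → ℂ} (h : ¬ (Integrable f ∧ Integrable (FT f))) :
    FT (FT f) = 0 := by
  by_cases hf : Integrable f
  · exact FT_eq_zero_of_not_integrable fun hFf => h ⟨hf, hFf⟩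
  · ext τ
    rw [FT_eq_zero_of_not_integrable hf]
    simp [FT]

lemma sobNormSq_FT_le (s : ℝ) {f : ℝ → ℂ} (hf : ∀ᵐ τ, ContinuousAt f τ) :
    sobNormSq s (FT f) ≤ (2 * π) ^ 2 * ∫ τ, (1 + τ ^ 2) ^ s * ‖f τ‖ ^ 2 := by
  by_cases h : Integrable f ∧ Integrable (FT f)
  · have hf_neg : ∀ᵐ τ, ContinuousAt f (-τ) :=
      (Measure.measurePreserving_neg (volume : Measure ℝ)).quasiMeasurePreserving.ae hf
    refine le_of_eq ?_
    calc sobNormSq s (FT f)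
        = ∫ τ, (fun τ => (2 * π) ^ 2 * ((1 + τ ^ 2) ^ s * ‖f τ‖ ^ 2)) (-τ) := by
          refine integral_congr_ae ?_
          filter_upwards [hf_neg] with τ hτ
          rw [FT_FT_apply h.1 h.2 hτ, norm_mul, neg_sq]
          simp only [Complex.norm_mul, Complex.norm_ofNat, Complex.norm_real, Real.norm_eq_abs,
            abs_of_pos Real.pi_pos]
          ring
      _ = (2 * π) ^ 2 * ∫ τ, (1 + τ ^ 2) ^ s * ‖f τ‖ ^ 2 := by
          rw [integral_neg_eq_self (fun τ => (2 * π) ^ 2 * ((1 + τ ^ 2) ^ s * ‖f τ‖ ^ 2)),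
            integral_const_mul]
  · calc sobNormSq s (FT f) = 0 := by simp [sobNormSq, FT_FT_eq_zero_of_not_integrable h]
      _ ≤ _ := by positivity

lemma continuousAt_indicator_Ioi {α E : Type*} [TopologicalSpace α] [LinearOrder α]
    [OrderClosedTopology α] [TopologicalSpace E] [Zero E] {g : α → E} {a τ : α}
    (hg : ContinuousOn g (Ioi a)) (hτ : τ ≠ a) : ContinuousAt ((Ioi a).indicator g) τ := by
  rcases hτ.lt_or_gt with hlt | hgt
  · refine (continuousAt_const (y := (0 : E))).congr ?_
    filter_upwards [Iio_mem_nhds hlt] with x hx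
    exact (indicator_of_notMem (not_lt.2 (le_of_lt hx)) g).symm
  · refine (hg.continuousAt (Ioi_mem_nhds hgt)).congr ?_
    filter_upwards [Ioi_mem_nhds hgt] with x hx
    exact (indicator_of_mem hx g).symm

def highFreqDensity (u₀ : ℝ → ℂ) : ℝ → ℂ :=
  (Ioi 1).indicator fun τ => (FT u₀ (√τ) + FT u₀ (-√τ)) / (2 * π * (√τ : ℂ))

lemma IIpart_eq_FT_highFreqDensity (u₀ : ℝ → ℂ) : IIpart u₀ = FT (highFreqDensity u₀) := by
  ext t
  rw [IIpart, FT, ← integral_indicator measurableSet_Ioi]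
  congr 1 with τ
  by_cases hτ : τ ∈ Ioi (1 : ℝ)
  · simp only [highFreqDensity, indicator_of_mem hτ, mul_div_assoc]
  · simp only [highFreqDensity, indicator_of_notMem hτ, mul_zero]

lemma ae_continuousAt_highFreqDensity (u₀ : ℝ → ℂ) :
    ∀ᵐ τ, ContinuousAt (highFreqDensity u₀) τ := by
  have hcont : ContinuousOn
      (fun τ : ℝ => (FT u₀ (√τ) + FT u₀ (-√τ)) / (2 * π * (√τ : ℂ))) (Ioi 1) := by
    have hFT := continuous_FT u₀
    refine ContinuousOn.div (by fun_prop) (by fun_prop) fun τ hτ => ?_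
    have hsqrt : (0 : ℝ) < √τ := Real.sqrt_pos.2 (zero_lt_one.trans hτ)
    norm_cast
    positivity
  filter_upwards [(countable_singleton (1 : ℝ)).ae_notMem volume] with τ hτ
  exact continuousAt_indicator_Ioi hcont hτ

lemma two_pi_sq_mul_norm_highFreqDensity_sq (u₀ : ℝ → ℂ) (τ : ℝ) :
    (2 * π) ^ 2 * ‖highFreqDensity u₀ τ‖ ^ 2 =
      (Ioi 1).indicator (fun τ => ‖FT u₀ (√τ) + FT u₀ (-√τ)‖ ^ 2 / τ) τ := by
  by_cases hτ : τ ∈ Ioi (1 : ℝ)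
  · have hτ0 : 0 < τ := zero_lt_one.trans hτ
    have hnorm : ‖(2 * π * (√τ : ℂ))‖ = 2 * π * √τ := by
      norm_cast
      exact Real.norm_of_nonneg (by positivity)
    simp only [highFreqDensity, indicator_of_mem hτ, norm_div, hnorm]
    field_simp
    rw [Real.sq_sqrt hτ0.le, mul_comm]
  · simp [highFreqDensity, indicator_of_notMem hτ]

lemma sobNormSq_IIpart_le_integral (ν : ℝ) (u₀ : ℝ → ℂ) :
    sobNormSq ν (IIpart u₀) ≤
      ∫ τ in Ioi 1, (1 + τ ^ 2) ^ ν * (‖FT u₀ (√τ) + FT u₀ (-√τ)‖ ^ 2 / τ) := by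
  rw [IIpart_eq_FT_highFreqDensity, ← integral_indicator measurableSet_Ioi]
  refine (sobNormSq_FT_le ν (ae_continuousAt_highFreqDensity u₀)).trans_eq ?_
  rw [← integral_const_mul]
  congr 1 with τ
  rw [mul_left_comm, two_pi_sq_mul_norm_highFreqDensity_sq, indicator_mul_right]

lemma image_sq_Ioi {a : ℝ} (ha : 0 ≤ a) : (fun ξ : ℝ => ξ ^ 2) '' Ioi a = Ioi (a ^ 2) := by
  ext τ
  constructor
  · rintro ⟨ξ, hξ, rfl⟩
    exact pow_lt_pow_left₀ hξ ha two_ne_zero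
  · intro hτ
    have hτ0 : 0 ≤ τ := (sq_nonneg a).trans hτ.le
    exact ⟨√τ, (Real.lt_sqrt ha).2 hτ, Real.sq_sqrt hτ0⟩

lemma setIntegral_Ioi_sq_eq {E : Type*} [NormedAddCommGroup E] [NormedSpace ℝ E] (h : ℝ → E)
    {a : ℝ} (ha : 0 ≤ a) : ∫ τ in Ioi (a ^ 2), h τ = ∫ ξ in Ioi a, (2 * ξ) • h (ξ ^ 2) := by
  have hinj : InjOn (fun ξ : ℝ => ξ ^ 2) (Ioi a) :=
    ((pow_left_strictMonoOn₀ two_ne_zero).mono fun ξ hξ => ha.trans (le_of_lt hξ)).injOn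
  rw [← image_sq_Ioi ha, integral_image_eq_integral_abs_deriv_smul measurableSet_Ioi
    (fun ξ _ => by simpa using (hasDerivAt_pow 2 ξ).hasDerivWithinAt) hinj]
  refine setIntegral_congr_fun measurableSet_Ioi fun ξ hξ => ?_
  rw [abs_of_pos (by linarith [ha.trans_lt hξ])]

lemma two_div_mul_rpow_le {ν ξ : ℝ} (hν : 0 ≤ ν) (hξ : 1 < ξ) :
    2 / ξ * (1 + (ξ ^ 2) ^ 2) ^ ν ≤ 3 * (1 + ξ ^ 2) ^ (2 * ν - 1 / 2) := by
  have hξ0 : 0 < ξ := zero_lt_one.trans hξ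
  have hw : 0 < 1 + ξ ^ 2 := by positivity
  have hroot : 2 * √(1 + ξ ^ 2) ≤ 3 * ξ := by
    have := Real.sqrt_le_sqrt (show 1 + ξ ^ 2 ≤ (3 / 2 * ξ) ^ 2 by nlinarith)
    rw [Real.sqrt_sq (by positivity)] at this
    linarith
  have hfactor : 2 / ξ ≤ 3 / √(1 + ξ ^ 2) := by
    rw [div_le_div_iff₀ hξ0 (Real.sqrt_pos.2 hw)]
    linarith
  have hpow : (1 + (ξ ^ 2) ^ 2) ^ ν ≤ (1 + ξ ^ 2) ^ (2 * ν) := by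
    rw [show (2 : ℝ) * ν = (2 : ℕ) * ν by norm_num, Real.rpow_natCast_mul hw.le]
    exact Real.rpow_le_rpow (by positivity) (by nlinarith) hν
  calc 2 / ξ * (1 + (ξ ^ 2) ^ 2) ^ ν
      ≤ 3 / √(1 + ξ ^ 2) * (1 + ξ ^ 2) ^ (2 * ν) :=
        mul_le_mul hfactor hpow (by positivity) (by positivity)
    _ = 3 * (1 + ξ ^ 2) ^ (2 * ν - 1 / 2) := by
        rw [Real.rpow_sub hw, ← Real.sqrt_eq_rpow]
        ring

lemma setIntegral_add_comp_neg_le {φ : ℝ → ℝ} (hφ : Integrable φ) (hφ0 : ∀ ξ, 0 ≤ φ ξ) (s : Set ℝ) :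
    ∫ ξ in s, (φ ξ + φ (-ξ)) ≤ 2 * ∫ ξ, φ ξ := by
  have hφneg : Integrable fun ξ => φ (-ξ) := hφ.comp_neg
  rw [integral_add hφ.integrableOn hφneg.integrableOn, two_mul]
  refine add_le_add (setIntegral_le_integral hφ (.of_forall hφ0)) ?_
  calc ∫ ξ in s, φ (-ξ) ≤ ∫ ξ, φ (-ξ) := setIntegral_le_integral hφneg (.of_forall fun ξ => hφ0 (-ξ))
    _ = ∫ ξ, φ ξ := integral_neg_eq_self φ volume

lemma norm_add_sq_le_two_mul {E : Type*} [SeminormedAddGroup E] (a b : E) :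
    ‖a + b‖ ^ 2 ≤ 2 * (‖a‖ ^ 2 + ‖b‖ ^ 2) :=
  (pow_le_pow_left₀ (norm_nonneg _) (norm_add_le a b) 2).trans add_sq_le

lemma sobNormSq_IIpart_le {ν : ℝ} (hν : 0 ≤ ν) {u₀ : ℝ → ℂ} (hu : MemSob (2 * ν - 1 / 2) u₀) :
    sobNormSq ν (IIpart u₀) ≤ 12 * sobNormSq (2 * ν - 1 / 2) u₀ := by
  set φ : ℝ → ℝ := fun ξ => (1 + ξ ^ 2) ^ (2 * ν - 1 / 2) * ‖FT u₀ ξ‖ ^ 2 with hφ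
  have hφ0 : ∀ ξ, 0 ≤ φ ξ := fun ξ => by positivity
  have hpointwise : ∀ ξ ∈ Ioi (1 : ℝ), (2 * ξ) • ((1 + (ξ ^ 2) ^ 2) ^ ν *
      (‖FT u₀ (√(ξ ^ 2)) + FT u₀ (-√(ξ ^ 2))‖ ^ 2 / ξ ^ 2)) ≤ 6 * (φ ξ + φ (-ξ)) := by
    intro ξ hξ
    have hξ0 : 0 < ξ := zero_lt_one.trans hξ
    calc (2 * ξ) • ((1 + (ξ ^ 2) ^ 2) ^ ν * (‖FT u₀ (√(ξ ^ 2)) + FT u₀ (-√(ξ ^ 2))‖ ^ 2 / ξ ^ 2))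
        = 2 / ξ * (1 + (ξ ^ 2) ^ 2) ^ ν * ‖FT u₀ ξ + FT u₀ (-ξ)‖ ^ 2 := by
          rw [Real.sqrt_sq hξ0.le, smul_eq_mul]
          field_simp
      _ ≤ 3 * (1 + ξ ^ 2) ^ (2 * ν - 1 / 2) * (2 * (‖FT u₀ ξ‖ ^ 2 + ‖FT u₀ (-ξ)‖ ^ 2)) :=
          mul_le_mul (two_div_mul_rpow_le hν hξ) (norm_add_sq_le_two_mul _ _) (by positivity)
            (by positivity)
      _ = 6 * (φ ξ + φ (-ξ)) := by
          simp only [hφ, neg_sq]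
          ring
  calc sobNormSq ν (IIpart u₀)
      ≤ ∫ τ in Ioi 1, (1 + τ ^ 2) ^ ν * (‖FT u₀ (√τ) + FT u₀ (-√τ)‖ ^ 2 / τ) :=
        sobNormSq_IIpart_le_integral ν u₀
    _ = ∫ ξ in Ioi 1, (2 * ξ) • ((1 + (ξ ^ 2) ^ 2) ^ ν *
          (‖FT u₀ (√(ξ ^ 2)) + FT u₀ (-√(ξ ^ 2))‖ ^ 2 / ξ ^ 2)) := by
        have := setIntegral_Ioi_sq_eq
          (fun τ => (1 + τ ^ 2) ^ ν * (‖FT u₀ (√τ) + FT u₀ (-√τ)‖ ^ 2 / τ)) zero_le_one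
        rwa [one_pow] at this
    _ ≤ ∫ ξ in Ioi 1, 6 * (φ ξ + φ (-ξ)) := by
        refine integral_mono_of_nonneg ?_ ((hu.add hu.comp_neg).const_mul 6).integrableOn
          ((ae_restrict_mem measurableSet_Ioi).mono hpointwise)
        filter_upwards [ae_restrict_mem measurableSet_Ioi] with ξ hξ
        have hξ0 : (0 : ℝ) < ξ := zero_lt_one.trans hξ
        simp only [Pi.zero_apply, smul_eq_mul]
        positivity
    _ = 6 * ∫ ξ in Ioi 1, (φ ξ + φ (-ξ)) := integral_const_mul _ _
    _ ≤ 6 * (2 * ∫ ξ, φ ξ) := by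
        gcongr
        exact setIntegral_add_comp_neg_le hu hφ0 _
    _ = 12 * sobNormSq (2 * ν - 1 / 2) u₀ := by
        rw [sobNormSq]
        ring

theorem high_frequency_part_sobolev_bound (ν : ℝ) (hν : 0 ≤ 2*ν - 1/2) :
    ∃ C : ℝ, 0 < C ∧ ∀ u₀ : ℝ → ℂ, MemSob (2*ν - 1/2) u₀ →
      sobNorm ν (IIpart u₀) ≤ C * sobNorm (2*ν - 1/2) u₀ := by
  refine ⟨√12, by positivity, fun u₀ hu => ?_⟩
  rw [sobNorm, sobNorm, ← Real.sqrt_mul (by norm_num)]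
  exact Real.sqrt_le_sqrt (sobNormSq_IIpart_le (by linarith) hu)
end
end
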